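/- arXiv:2105.12866 — 3 statements merged into one kernel-verified Lean document; each statement's English description precedes it below -/
import Mathlib

section
/- Let m ∈ ℕ with m ≥ 1, and for each j = 1, …, m let w1ⱼ, b1ⱼ : ℝ^{n2} → ℝ^{n1} and w2ⱼ, b2ⱼ : ℝ^{n1} → ℝ^{n2} be continuous, and let F^{(j)}_Δt denote the ODE-style affine coupling pair with step Δt built from (w1ⱼ, b1ⱼ, w2ⱼ, b2ⱼ). Then there exists a function g_{[m]} : ℝ^{n1+n2} → ℝ^{n1+n2} such that for every y ∈ ℝ^{n1+n2}, lim_{Δt → 0⁺} ( (F^{(m)}_Δt ∘ ⋯ ∘ F^{(1)}_Δt)(y) − y ) / Δt = g_{[m]}(y); moreover g_{[m]}(y) = Σ_{j=1}^{m} g^{(j)}(y), where g^{(j)}(y1, y2) = (y1 ⊙ w1ⱼ(y2) + b1ⱼ(y2), y2 ⊙ w2ⱼ(y1) + b2ⱼ(y1)). Hence the m-fold composition of coupling pairs is a one-step discretization of the ODE dy/dt = g_{[m]}(y). -/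
/-!
Each coupling pair is `y ↦ y + Δt • s(Δt, y)` with a slope `s` jointly continuous in `(Δt, y)` and
`s(0, ·) = g`. This form survives composition: if the first maps send `y` to `y + Δt • S(Δt)` with
`S` continuous, the next one sends it to `y + Δt • (S(Δt) + s(Δt, y + Δt • S(Δt)))`. At `Δt = 0`
all intermediate points equal `y`, so `S(0) = Σ g^{(j)}(y)`, and the difference quotient is
`S(Δt) → S(0)`.
-/

open Filter Topology Function

section PerturbationOfIdentity

variable {E : Type*} [AddCommGroup E] [Module ℝ E] [TopologicalSpace E]
  [IsTopologicalAddGroup E] [ContinuousSMul ℝ E]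

theorem exists_continuous_foldl_eq_add_smul {φ : ℕ → ℝ → E → E}
    (hφ : ∀ j, Continuous (uncurry (φ j))) (y : E) (M : ℕ) :
    ∃ H : ℝ → E, Continuous H ∧ H 0 = ∑ j ∈ Finset.range M, φ j 0 y ∧
      ∀ t, (List.range M).foldl (fun u j => u + t • φ j t u) y = y + t • H t := by
  induction M with
  | zero => exact ⟨fun _ => 0, continuous_const, by simp, fun t => by simp⟩
  | succ M ih =>
    obtain ⟨H, hH, hH0, hfold⟩ := ih
    refine ⟨fun t => H t + φ M t (y + t • H t), ?_, ?_, fun t => ?_⟩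
    · exact hH.add ((hφ M).comp (continuous_id.prodMk (continuous_const.add
        (continuous_id.smul hH))))
    · simp [hH0, Finset.sum_range_succ]
    · rw [List.range_succ, List.foldl_append, hfold]
      simp only [List.foldl_cons, List.foldl_nil, smul_add]
      abel

theorem tendsto_inv_smul_foldl_sub_self {φ : ℕ → ℝ → E → E}
    (hφ : ∀ j, Continuous (uncurry (φ j))) (y : E) (M : ℕ) :
    Tendsto (fun t : ℝ => t⁻¹ • ((List.range M).foldl (fun u j => u + t • φ j t u) y - y))
      (𝓝[≠] 0) (𝓝 (∑ j ∈ Finset.range M, φ j 0 y)) := by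
  obtain ⟨H, hH, hH0, hfold⟩ := exists_continuous_foldl_eq_add_smul hφ y M
  have hquot : ∀ t ∈ ({0}ᶜ : Set ℝ),
      H t = t⁻¹ • ((List.range M).foldl (fun u j => u + t • φ j t u) y - y) := by
    intro t ht
    rw [hfold, add_sub_cancel_left, inv_smul_smul₀ ht]
  rw [← hH0]
  exact ((hH.tendsto 0).mono_left nhdsWithin_le_nhds).congr'
    (eventually_nhdsWithin_of_forall hquot)

end PerturbationOfIdentity

section CouplingPair

variable {E₁ E₂ : Type*} [Ring E₁] [Module ℝ E₁] [Ring E₂]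

/-- The coupling pair with step `Δt` is `y ↦ y + Δt • couplingSlope w₁ b₁ w₂ b₂ Δt y`. -/
def couplingSlope (w₁ b₁ : E₂ → E₁) (w₂ b₂ : E₁ → E₂) (Δt : ℝ) (y : E₁ × E₂) : E₁ × E₂ :=
  let z₁ := y.1 + Δt • (y.1 * w₁ y.2 + b₁ y.2)
  (y.1 * w₁ y.2 + b₁ y.2, y.2 * w₂ z₁ + b₂ z₁)

theorem continuous_couplingSlope [TopologicalSpace E₁] [IsTopologicalRing E₁]
    [ContinuousSMul ℝ E₁] [TopologicalSpace E₂] [IsTopologicalRing E₂] {w₁ b₁ : E₂ → E₁}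
    {w₂ b₂ : E₁ → E₂} (hw₁ : Continuous w₁) (hb₁ : Continuous b₁) (hw₂ : Continuous w₂)
    (hb₂ : Continuous b₂) :
    Continuous (uncurry (couplingSlope w₁ b₁ w₂ b₂)) := by
  unfold couplingSlope
  fun_prop

theorem couplingSlope_zero (w₁ b₁ : E₂ → E₁) (w₂ b₂ : E₁ → E₂) (y : E₁ × E₂) :
    couplingSlope w₁ b₁ w₂ b₂ 0 y = (y.1 * w₁ y.2 + b₁ y.2, y.2 * w₂ y.1 + b₂ y.1) := by
  simp [couplingSlope]

end CouplingPair

theorem coupling_composition_is_ode_discretization_general (n1 n2 m : ℕ)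
    (w1 b1 : ℕ → (Fin n2 → ℝ) → (Fin n1 → ℝ)) (w2 b2 : ℕ → (Fin n1 → ℝ) → (Fin n2 → ℝ))
    (hw1 : ∀ j, Continuous (w1 j)) (hb1 : ∀ j, Continuous (b1 j))
    (hw2 : ∀ j, Continuous (w2 j)) (hb2 : ∀ j, Continuous (b2 j))
    (F : ℕ → ℝ → (Fin n1 → ℝ) × (Fin n2 → ℝ) → (Fin n1 → ℝ) × (Fin n2 → ℝ))
    (hF : ∀ (j : ℕ) (Δt : ℝ) (y : (Fin n1 → ℝ) × (Fin n2 → ℝ)),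
      F j Δt y =
        (fun i => y.1 i + (y.1 i * w1 j y.2 i + b1 j y.2 i) * Δt,
         fun k => y.2 k +
           (y.2 k * w2 j (fun i => y.1 i + (y.1 i * w1 j y.2 i + b1 j y.2 i) * Δt) k
             + b2 j (fun i => y.1 i + (y.1 i * w1 j y.2 i + b1 j y.2 i) * Δt) k) * Δt))
    (g : ℕ → (Fin n1 → ℝ) × (Fin n2 → ℝ) → (Fin n1 → ℝ) × (Fin n2 → ℝ))
    (hg : ∀ (j : ℕ) (y : (Fin n1 → ℝ) × (Fin n2 → ℝ)),
      g j y = (fun i => y.1 i * w1 j y.2 i + b1 j y.2 i,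
               fun k => y.2 k * w2 j y.1 k + b2 j y.1 k)) :
    ∀ y : (Fin n1 → ℝ) × (Fin n2 → ℝ),
      Tendsto
        (fun Δt : ℝ => Δt⁻¹ • ((List.range m).foldl (fun u j => F j Δt u) y - y))
        (𝓝[>] (0 : ℝ)) (𝓝 (∑ j ∈ Finset.range m, g j y)) := by
  intro y
  have hF_slope : F = fun j Δt u => u + Δt • couplingSlope (w1 j) (b1 j) (w2 j) (b2 j) Δt u := by
    funext j Δt u
    have hz : (fun i => u.1 i + (u.1 i * w1 j u.2 i + b1 j u.2 i) * Δt)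
        = u.1 + Δt • (u.1 * w1 j u.2 + b1 j u.2) := by
      ext i
      simp only [Pi.add_apply, Pi.smul_apply, Pi.mul_apply, smul_eq_mul]
      ring
    rw [hF, hz]
    ext i
    · simp only [couplingSlope, Prod.fst_add, Prod.smul_fst, Pi.add_apply, Pi.smul_apply,
        smul_eq_mul]
    · simp only [couplingSlope, Prod.snd_add, Prod.smul_snd, Pi.add_apply, Pi.smul_apply,
        Pi.mul_apply, smul_eq_mul]
      ring
  have hg_slope : g = fun j u => couplingSlope (w1 j) (b1 j) (w2 j) (b2 j) 0 u := by
    funext j u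
    rw [hg, couplingSlope_zero]
    rfl
  subst hF_slope hg_slope
  exact (tendsto_inv_smul_foldl_sub_self (fun j => continuous_couplingSlope (hw1 j) (hb1 j)
    (hw2 j) (hb2 j)) y m).mono_left (nhdsWithin_mono _ fun t ht => ne_of_gt ht)

/-- The `m`-fold composition of ODE-style affine coupling pairs (each with its own
continuous parameter functions, all with the same step `Δt`) satisfies
`lim_{Δt→0⁺} (F^{(m)}_Δt ∘ ⋯ ∘ F^{(1)}_Δt (y) − y)/Δt = Σ_{j=1}^m g^{(j)}(y)`,
where `g^{(j)}(y1,y2) = (y1 ⊙ w1ⱼ(y2) + b1ⱼ(y2), y2 ⊙ w2ⱼ(y1) + b2ⱼ(y1))`. -/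
theorem coupling_composition_is_ode_discretization (n1 n2 m : ℕ) (hm : 1 ≤ m)
    (w1 b1 : ℕ → (Fin n2 → ℝ) → (Fin n1 → ℝ)) (w2 b2 : ℕ → (Fin n1 → ℝ) → (Fin n2 → ℝ))
    (hw1 : ∀ j, Continuous (w1 j)) (hb1 : ∀ j, Continuous (b1 j))
    (hw2 : ∀ j, Continuous (w2 j)) (hb2 : ∀ j, Continuous (b2 j))
    (F : ℕ → ℝ → (Fin n1 → ℝ) × (Fin n2 → ℝ) → (Fin n1 → ℝ) × (Fin n2 → ℝ))
    (hF : ∀ (j : ℕ) (Δt : ℝ) (y : (Fin n1 → ℝ) × (Fin n2 → ℝ)),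
      F j Δt y =
        (fun i => y.1 i + (y.1 i * w1 j y.2 i + b1 j y.2 i) * Δt,
         fun k => y.2 k +
           (y.2 k * w2 j (fun i => y.1 i + (y.1 i * w1 j y.2 i + b1 j y.2 i) * Δt) k
             + b2 j (fun i => y.1 i + (y.1 i * w1 j y.2 i + b1 j y.2 i) * Δt) k) * Δt))
    (g : ℕ → (Fin n1 → ℝ) × (Fin n2 → ℝ) → (Fin n1 → ℝ) × (Fin n2 → ℝ))
    (hg : ∀ (j : ℕ) (y : (Fin n1 → ℝ) × (Fin n2 → ℝ)),
      g j y = (fun i => y.1 i * w1 j y.2 i + b1 j y.2 i,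
               fun k => y.2 k * w2 j y.1 k + b2 j y.1 k)) :
    ∀ y : (Fin n1 → ℝ) × (Fin n2 → ℝ),
      Tendsto
        (fun Δt : ℝ => Δt⁻¹ • ((List.range m).foldl (fun u j => F j Δt u) y - y))
        (𝓝[>] (0 : ℝ)) (𝓝 (∑ j ∈ Finset.range m, g j y)) :=
  coupling_composition_is_ode_discretization_general n1 n2 m w1 b1 w2 b2 hw1 hb1 hw2 hb2 F hF g hg
end

section
/- Let w1, b1 : ℝ^{n2} → ℝ^{n1} and w2, b2 : ℝ^{n1} → ℝ^{n2} be functions whose components are bounded in absolute value by constants M1 and M2 respectively, and let Δt > 0 satisfy Δt·M1 < 1 and Δt·M2 < 1. Then the ODE-style affine coupling pair F_Δt is a bijection of ℝ^{n1} × ℝ^{n2}, with inverse given by y2 = (z2 − b2(z1)·Δt) / (1 + w2(z1)·Δt) followed by y1 = (z1 − b1(y2)·Δt) / (1 + w1(y2)·Δt), where the divisions are componentwise. -/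
/-!
Each half of the coupling pair is, for a frozen value of the other half, the componentwise
affine map `x ↦ x (1 + w Δt) + b Δt`. The bound `|w| ≤ M` with `Δt M < 1` keeps every slope
`1 + w Δt` positive, so each half is undone by componentwise division; since the second half
reads the already updated `z1`, the inverse solves for `y2` first and then for `y1`.
-/

section AffineCoupling

variable {K : Type*} [Field K] {ι ι₁ ι₂ : Type*}

def affineStep (w b : ι → K) (Δt : K) (x : ι → K) : ι → K :=
  fun i => x i + (x i * w i + b i) * Δt

def affineStepInv (w b : ι → K) (Δt : K) (z : ι → K) : ι → K :=
  fun i => (z i - b i * Δt) / (1 + w i * Δt)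

theorem affineStepInv_affineStep {w b : ι → K} {Δt : K} (hw : ∀ i, 1 + w i * Δt ≠ 0)
    (x : ι → K) : affineStepInv w b Δt (affineStep w b Δt x) = x := by
  funext i
  rw [affineStepInv, affineStep, div_eq_iff (hw i)]
  ring

theorem affineStep_affineStepInv {w b : ι → K} {Δt : K} (hw : ∀ i, 1 + w i * Δt ≠ 0)
    (z : ι → K) : affineStep w b Δt (affineStepInv w b Δt z) = z := by
  funext i
  simp only [affineStep, affineStepInv]
  linear_combination div_mul_cancel₀ (z i - b i * Δt) (hw i)

def couplingPair (w₁ b₁ : (ι₂ → K) → ι₁ → K) (w₂ b₂ : (ι₁ → K) → ι₂ → K) (Δt : K)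
    (y : (ι₁ → K) × (ι₂ → K)) : (ι₁ → K) × (ι₂ → K) :=
  let z₁ := affineStep (w₁ y.2) (b₁ y.2) Δt y.1
  (z₁, affineStep (w₂ z₁) (b₂ z₁) Δt y.2)

def couplingPairInv (w₁ b₁ : (ι₂ → K) → ι₁ → K) (w₂ b₂ : (ι₁ → K) → ι₂ → K) (Δt : K)
    (z : (ι₁ → K) × (ι₂ → K)) : (ι₁ → K) × (ι₂ → K) :=
  let y₂ := affineStepInv (w₂ z.1) (b₂ z.1) Δt z.2
  (affineStepInv (w₁ y₂) (b₁ y₂) Δt z.1, y₂)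

variable {w₁ b₁ : (ι₂ → K) → ι₁ → K} {w₂ b₂ : (ι₁ → K) → ι₂ → K} {Δt : K}

theorem couplingPairInv_leftInverse (hw₁ : ∀ x i, 1 + w₁ x i * Δt ≠ 0)
    (hw₂ : ∀ x j, 1 + w₂ x j * Δt ≠ 0) :
    Function.LeftInverse (couplingPairInv w₁ b₁ w₂ b₂ Δt) (couplingPair w₁ b₁ w₂ b₂ Δt) := by
  intro y
  simp only [couplingPair, couplingPairInv, affineStepInv_affineStep (hw₂ _),
    affineStepInv_affineStep (hw₁ _)]

theorem couplingPairInv_rightInverse (hw₁ : ∀ x i, 1 + w₁ x i * Δt ≠ 0)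
    (hw₂ : ∀ x j, 1 + w₂ x j * Δt ≠ 0) :
    Function.RightInverse (couplingPairInv w₁ b₁ w₂ b₂ Δt) (couplingPair w₁ b₁ w₂ b₂ Δt) := by
  intro z
  simp only [couplingPair, couplingPairInv, affineStep_affineStepInv (hw₁ _),
    affineStep_affineStepInv (hw₂ _)]

end AffineCoupling

theorem one_add_mul_pos_of_abs_le {w M Δt : ℝ} (hw : |w| ≤ M) (hΔt : 0 ≤ Δt)
    (hM : Δt * M < 1) : 0 < 1 + w * Δt := by
  nlinarith [neg_abs_le w]

theorem coupling_pair_bijective_general (n1 n2 : ℕ)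
    (w1 b1 : (Fin n2 → ℝ) → (Fin n1 → ℝ)) (w2 b2 : (Fin n1 → ℝ) → (Fin n2 → ℝ))
    (M1 M2 : ℝ)
    (hw1 : ∀ x i, |w1 x i| ≤ M1)
    (hw2 : ∀ x j, |w2 x j| ≤ M2)
    (Δt : ℝ) (hΔt : 0 < Δt) (hM1 : Δt * M1 < 1) (hM2 : Δt * M2 < 1)
    (F G : (Fin n1 → ℝ) × (Fin n2 → ℝ) → (Fin n1 → ℝ) × (Fin n2 → ℝ))
    (hF : ∀ y : (Fin n1 → ℝ) × (Fin n2 → ℝ),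
      F y =
        (fun i => y.1 i + (y.1 i * w1 y.2 i + b1 y.2 i) * Δt,
         fun j => y.2 j +
           (y.2 j * w2 (fun i => y.1 i + (y.1 i * w1 y.2 i + b1 y.2 i) * Δt) j
             + b2 (fun i => y.1 i + (y.1 i * w1 y.2 i + b1 y.2 i) * Δt) j) * Δt))
    (hG : ∀ z : (Fin n1 → ℝ) × (Fin n2 → ℝ),
      G z =
        (fun i => (z.1 i
            - b1 (fun j => (z.2 j - b2 z.1 j * Δt) / (1 + w2 z.1 j * Δt)) i * Δt)
          / (1 + w1 (fun j => (z.2 j - b2 z.1 j * Δt) / (1 + w2 z.1 j * Δt)) i * Δt),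
         fun j => (z.2 j - b2 z.1 j * Δt) / (1 + w2 z.1 j * Δt))) :
    Function.Bijective F ∧ Function.LeftInverse G F ∧ Function.RightInverse G F := by
  obtain rfl : F = couplingPair w1 b1 w2 b2 Δt := funext hF
  obtain rfl : G = couplingPairInv w1 b1 w2 b2 Δt := funext hG
  have hw1' x i := (one_add_mul_pos_of_abs_le (hw1 x i) hΔt.le hM1).ne'
  have hw2' x j := (one_add_mul_pos_of_abs_le (hw2 x j) hΔt.le hM2).ne'
  have hleft := couplingPairInv_leftInverse (b₁ := b1) (b₂ := b2) hw1' hw2'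
  have hright := couplingPairInv_rightInverse (b₁ := b1) (b₂ := b2) hw1' hw2'
  exact ⟨⟨hleft.injective, hright.surjective⟩, hleft, hright⟩

/-- If the components of `w1, b1` are bounded by `M1` and those of `w2, b2` by `M2`,
and `Δt·M1 < 1`, `Δt·M2 < 1` with `Δt > 0`, then the ODE-style affine coupling pair
`F_Δt` is a bijection, with the explicit inverse obtained by first solving
`y2 = (z2 − b2(z1)Δt)/(1 + w2(z1)Δt)` and then `y1 = (z1 − b1(y2)Δt)/(1 + w1(y2)Δt)`. -/
theorem coupling_pair_bijective (n1 n2 : ℕ)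
    (w1 b1 : (Fin n2 → ℝ) → (Fin n1 → ℝ)) (w2 b2 : (Fin n1 → ℝ) → (Fin n2 → ℝ))
    (M1 M2 : ℝ)
    (hw1 : ∀ x i, |w1 x i| ≤ M1) (hb1 : ∀ x i, |b1 x i| ≤ M1)
    (hw2 : ∀ x j, |w2 x j| ≤ M2) (hb2 : ∀ x j, |b2 x j| ≤ M2)
    (Δt : ℝ) (hΔt : 0 < Δt) (hM1 : Δt * M1 < 1) (hM2 : Δt * M2 < 1)
    (F G : (Fin n1 → ℝ) × (Fin n2 → ℝ) → (Fin n1 → ℝ) × (Fin n2 → ℝ))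
    (hF : ∀ y : (Fin n1 → ℝ) × (Fin n2 → ℝ),
      F y =
        (fun i => y.1 i + (y.1 i * w1 y.2 i + b1 y.2 i) * Δt,
         fun j => y.2 j +
           (y.2 j * w2 (fun i => y.1 i + (y.1 i * w1 y.2 i + b1 y.2 i) * Δt) j
             + b2 (fun i => y.1 i + (y.1 i * w1 y.2 i + b1 y.2 i) * Δt) j) * Δt))
    (hG : ∀ z : (Fin n1 → ℝ) × (Fin n2 → ℝ),
      G z =
        (fun i => (z.1 i
            - b1 (fun j => (z.2 j - b2 z.1 j * Δt) / (1 + w2 z.1 j * Δt)) i * Δt)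
          / (1 + w1 (fun j => (z.2 j - b2 z.1 j * Δt) / (1 + w2 z.1 j * Δt)) i * Δt),
         fun j => (z.2 j - b2 z.1 j * Δt) / (1 + w2 z.1 j * Δt))) :
    Function.Bijective F ∧ Function.LeftInverse G F ∧ Function.RightInverse G F :=
  coupling_pair_bijective_general n1 n2 w1 b1 w2 b2 M1 M2 hw1 hw2 Δt hΔt hM1 hM2 F G hF hG
end

section
/- In the setting of the adjoint method for a chain of parameterized invertible maps (forward states y_{[i]}, adjoints λ_{[i]}, loss L, and functions g_{[i]} as defined there), suppose the parameters are tied: θ_{[i]} = θ for all i in a subset 𝓘 ⊆ {0, 1, …, n−1}, with the remaining parameters held fixed. Then the gradient of L with respect to the shared parameter θ equals Σ_{i ∈ 𝓘} [ (∂F_{[i]}/∂θ(y_{[i]}, θ))ᵀ λ_{[i]} − ∇_θ g_{[i]}(y_{[i]}, θ) ]. -/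
/-! Write `A_i`, `B_i` for the partial derivatives of `F_{[i]}` in `u` and `θ` at the forward
states. Differentiating along a direction `v` of the shared parameter, the tangent vectors
`w_i = ∂y_{[i]}/∂θ · v` satisfy `w_0 = 0` and `w_{i+1} = A_i w_i + B_i v_i`, with `v_i = v` for
`i ∈ 𝓘` and `v_i = 0` otherwise. The adjoint recursion is exactly what makes
`⟨w_{i+1}, λ_i⟩ = ⟨w_i, λ_{i-1}⟩ + ∇_u g_i · w_i + ⟨B_i v_i, λ_i⟩`, so `⟨w_n, λ_{n-1}⟩`, which is
the derivative of the prior term, telescopes: the contributions `∇_u g_i · w_i` of the state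
sensitivities cancel and only the explicit `θ`-derivatives at the tied indices remain. -/

open Finset Matrix

section DotProduct

variable {ι κ R 𝓕 𝓖 : Type*} [Fintype ι] [DecidableEq ι] [Fintype κ]

theorem dotProduct_eq_apply_of_eq_apply_single [CommSemiring R] [FunLike 𝓕 (ι → R) R]
    [LinearMapClass 𝓕 R (ι → R) R] {φ : 𝓕} {μ : ι → R} (hμ : ∀ k, μ k = φ (Pi.single k 1))
    (v : ι → R) : v ⬝ᵥ μ = φ v := by
  conv_rhs => rw [← (Pi.basisFun R ι).sum_repr v]
  simp [dotProduct, hμ, smul_eq_mul]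

theorem dotProduct_eq_sub_of_eq_transpose_sub [CommRing R] [FunLike 𝓕 (ι → R) (κ → R)]
    [LinearMapClass 𝓕 R (ι → R) (κ → R)] [FunLike 𝓖 (ι → R) R] [LinearMapClass 𝓖 R (ι → R) R]
    {T : 𝓕} {c : 𝓖} {μ : ι → R} {ν : κ → R}
    (hμ : μ = fun k => ∑ j, T (Pi.single k 1) j * ν j - c (Pi.single k 1)) (v : ι → R) :
    v ⬝ᵥ μ = T v ⬝ᵥ ν - c v :=
  dotProduct_eq_apply_of_eq_apply_single
    (φ := (dotProductBilin R R).flip ν ∘ₗ (T : (ι → R) →ₗ[R] κ → R) - (c : (ι → R) →ₗ[R] R))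
    (fun k => by simp [hμ, dotProduct]) v

end DotProduct

theorem dual_apply_eq_sum_of_adjoint_recursion {R E : Type*} [CommRing R] [AddCommGroup E]
    [Module R E]
    {A : ℕ → E →ₗ[R] E} {b w : ℕ → E} {ℓ c : ℕ → Module.Dual R E} {m : ℕ}
    (hw0 : w 0 = 0) (hw : ∀ i, w (i + 1) = A i (w i) + b i)
    (hℓ : ∀ i < m, ∀ v, ℓ i v = ℓ (i + 1) (A (i + 1) v) - c (i + 1) v) :
    ℓ m (w (m + 1)) = ∑ i ∈ range (m + 1), (ℓ i (b i) + c i (w i)) := by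
  induction m with
  | zero => simp [hw, hw0]
  | succ m ih =>
    have hm := hℓ m m.lt_succ_self (w (m + 1))
    rw [sum_range_succ, ← ih fun i hi => hℓ i (hi.trans m.lt_succ_self), hm, hw (m + 1), map_add]
    ring

variable {𝕜 E G H F : Type*} [NontriviallyNormedField 𝕜] [NormedAddCommGroup E] [NormedSpace 𝕜 E]
  [NormedAddCommGroup G] [NormedSpace 𝕜 G] [NormedAddCommGroup H] [NormedSpace 𝕜 H]
  [NormedAddCommGroup F] [NormedSpace 𝕜 F]

theorem HasFDerivAt.comp₂_partial {Φ : E → G → F} {a : H → E} {b : H → G}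
    {a' : H →L[𝕜] E} {b' : H →L[𝕜] G} {x : H}
    (hΦ : DifferentiableAt 𝕜 (fun q : E × G => Φ q.1 q.2) (a x, b x))
    (ha : HasFDerivAt a a' x) (hb : HasFDerivAt b b' x) :
    HasFDerivAt (fun t => Φ (a t) (b t))
      ((fderiv 𝕜 (fun u => Φ u (b x)) (a x)).comp a' +
        (fderiv 𝕜 (fun v => Φ (a x) v) (b x)).comp b') x := by
  set D := fderiv 𝕜 (fun q : E × G => Φ q.1 q.2) (a x, b x)
  have hD : HasFDerivAt (fun q : E × G => Φ q.1 q.2) D (a x, b x) := hΦ.hasFDerivAt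
  have h₁ : fderiv 𝕜 (fun u => Φ u (b x)) (a x) = D.comp (.inl 𝕜 E G) :=
    HasFDerivAt.fderiv (hD.comp (a x) (hasFDerivAt_prodMk_left (𝕜 := 𝕜) (a x) (b x)) :)
  have h₂ : fderiv 𝕜 (fun v => Φ (a x) v) (b x) = D.comp (.inr 𝕜 E G) :=
    HasFDerivAt.fderiv (hD.comp (b x) (hasFDerivAt_prodMk_right (a x) (b x)) :)
  have hsplit : D.comp (a'.prod b') =
      (D.comp (.inl 𝕜 E G)).comp a' + (D.comp (.inr 𝕜 E G)).comp b' := by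
    ext1 t
    simp [← map_add]
  rw [h₁, h₂, ← hsplit]
  exact hD.comp x (ha.prodMk hb)

theorem hasFDerivAt_ite_const (c : Prop) [Decidable c] (g x : G) :
    HasFDerivAt (fun t => if c then t else g) (if c then ContinuousLinearMap.id 𝕜 G else 0) x := by
  split_ifs
  exacts [hasFDerivAt_id x, hasFDerivAt_const g x]

section Recursion

variable {Φ : ℕ → E → G → E} {π : ℕ → H → G} {x : ℕ → H → E} {x₀ : E} {θ : H}

theorem differentiableAt_of_recursion (hx0 : ∀ t, x 0 t = x₀)
    (hxs : ∀ i t, x (i + 1) t = Φ i (x i t) (π i t))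
    (hΦ : ∀ i, DifferentiableAt 𝕜 (fun q : E × G => Φ i q.1 q.2) (x i θ, π i θ))
    (hπ : ∀ i, DifferentiableAt 𝕜 (π i) θ) (i : ℕ) : DifferentiableAt 𝕜 (x i) θ := by
  induction i with
  | zero => rw [funext hx0]; exact differentiableAt_const x₀
  | succ i ih =>
    rw [funext (hxs i)]
    exact (ih.hasFDerivAt.comp₂_partial (hΦ i) (hπ i).hasFDerivAt).differentiableAt

theorem fderiv_loss_apply_eq_sum_adjoint {γ : ℕ → E → G → 𝕜} {h : E → 𝕜}
    {π' : ℕ → H →L[𝕜] G} {ℓ : ℕ → Module.Dual 𝕜 E} {m : ℕ}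
    (hx0 : ∀ t, x 0 t = x₀) (hxs : ∀ i t, x (i + 1) t = Φ i (x i t) (π i t))
    (hΦ : ∀ i, DifferentiableAt 𝕜 (fun q : E × G => Φ i q.1 q.2) (x i θ, π i θ))
    (hγ : ∀ i, DifferentiableAt 𝕜 (fun q : E × G => γ i q.1 q.2) (x i θ, π i θ))
    (hh : DifferentiableAt 𝕜 h (x (m + 1) θ)) (hπ : ∀ i, HasFDerivAt (π i) (π' i) θ)
    (hℓ_top : ∀ v, ℓ m v = -fderiv 𝕜 h (x (m + 1) θ) v)
    (hℓ : ∀ i < m, ∀ v, ℓ i v =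
      ℓ (i + 1) (fderiv 𝕜 (fun u => Φ (i + 1) u (π (i + 1) θ)) (x (i + 1) θ) v)
        - fderiv 𝕜 (fun u => γ (i + 1) u (π (i + 1) θ)) (x (i + 1) θ) v)
    (v : H) :
    fderiv 𝕜 (fun t => -h (x (m + 1) t) - ∑ i ∈ range (m + 1), γ i (x i t) (π i t)) θ v
      = ∑ i ∈ range (m + 1), (ℓ i (fderiv 𝕜 (fun s => Φ i (x i θ) s) (π i θ) (π' i v))
          - fderiv 𝕜 (fun s => γ i (x i θ) s) (π i θ) (π' i v)) := by
  have hx i : HasFDerivAt (x i) (fderiv 𝕜 (x i) θ) θ :=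
    (differentiableAt_of_recursion hx0 hxs hΦ (fun i => (hπ i).differentiableAt) i).hasFDerivAt
  have hstep i : fderiv 𝕜 (x (i + 1)) θ =
      (fderiv 𝕜 (fun u => Φ i u (π i θ)) (x i θ)).comp (fderiv 𝕜 (x i) θ)
        + (fderiv 𝕜 (fun s => Φ i (x i θ) s) (π i θ)).comp (π' i) := by
    rw [funext (hxs i)]
    exact ((hx i).comp₂_partial (hΦ i) (hπ i)).fderiv
  have hloss : HasFDerivAt
      (fun t => -h (x (m + 1) t) - ∑ i ∈ range (m + 1), γ i (x i t) (π i t)) _ θ :=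
    (hh.hasFDerivAt.comp θ (hx (m + 1))).neg.sub
      (HasFDerivAt.fun_sum (u := range (m + 1)) fun i _ => (hx i).comp₂_partial (hγ i) (hπ i))
  have htel := dual_apply_eq_sum_of_adjoint_recursion (m := m) (w := fun i => fderiv 𝕜 (x i) θ v)
    (A := fun i => (fderiv 𝕜 (fun u => Φ i u (π i θ)) (x i θ) : E →ₗ[𝕜] E))
    (b := fun i => fderiv 𝕜 (fun s => Φ i (x i θ) s) (π i θ) (π' i v))
    (c := fun i => fderiv 𝕜 (fun u => γ i u (π i θ)) (x i θ)) (by simp [funext hx0])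
    (fun i => by simp [hstep]) hℓ
  rw [hloss.fderiv]
  simp only [hℓ_top] at htel
  simp only [_root_.sub_apply, _root_.neg_apply, _root_.add_apply, _root_.sum_apply,
    ContinuousLinearMap.comp_apply, ContinuousLinearMap.coe_coe, htel, sum_add_distrib,
    sum_sub_distrib]
  ring

end Recursion

theorem adjoint_method_tied_parameters_general (d p n : ℕ) (hn : 1 ≤ n)
    (y : Fin d → ℝ)
    (F : ℕ → (Fin d → ℝ) → (Fin p → ℝ) → (Fin d → ℝ))
    (hF : ∀ i, ContDiff ℝ 1 (fun q : (Fin d → ℝ) × (Fin p → ℝ) => F i q.1 q.2))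
    (g : ℕ → (Fin d → ℝ) → (Fin p → ℝ) → ℝ)
    (hgC1 : ∀ i, ContDiff ℝ 1 (fun q : (Fin d → ℝ) × (Fin p → ℝ) => g i q.1 q.2))
    (pZ : (Fin d → ℝ) → ℝ) (hpZ : ContDiff ℝ 1 pZ) (hpZpos : ∀ z, 0 < pZ z)
    (Θ : ℕ → (Fin p → ℝ))
    (fwd : (ℕ → (Fin p → ℝ)) → ℕ → (Fin d → ℝ))
    (hfwd0 : ∀ P, fwd P 0 = y)
    (hfwds : ∀ P k, fwd P (k + 1) = F k (fwd P k) (P k))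
    (L : (ℕ → (Fin p → ℝ)) → ℝ)
    (hL : ∀ P, L P = -Real.log (pZ (fwd P n))
      - ∑ k ∈ Finset.range n, g k (fwd P k) (P k))
    (lam : ℕ → (Fin d → ℝ))
    (hlam_top : lam (n - 1) = fun k =>
      -(fderiv ℝ (fun z => Real.log (pZ z)) (fwd Θ n) (Pi.single k 1)))
    (hlam_rec : ∀ i, 1 ≤ i → i ≤ n - 1 → lam (i - 1) = fun k =>
      (∑ j, fderiv ℝ (fun u => F i u (Θ i)) (fwd Θ i) (Pi.single k 1) j * lam i j)
        - fderiv ℝ (fun u => g i u (Θ i)) (fwd Θ i) (Pi.single k 1))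
    -- tied parameters on the index set 𝓘
    (I : Finset ℕ) (hI : I ⊆ Finset.range n)
    (θ0 : Fin p → ℝ) (hΘI : ∀ i ∈ I, Θ i = θ0) :
    ∀ k : Fin p,
      fderiv ℝ (fun θ => L (fun i => if i ∈ I then θ else Θ i)) θ0 (Pi.single k 1)
        = ∑ i ∈ I,
            ((∑ j, fderiv ℝ (fun θ => F i (fwd Θ i) θ) (Θ i) (Pi.single k 1) j * lam i j)
              - fderiv ℝ (fun θ => g i (fwd Θ i) θ) (Θ i) (Pi.single k 1)) := by
  intro k
  obtain ⟨m, rfl⟩ : ∃ m, n = m + 1 := ⟨n - 1, by omega⟩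
  set P : (Fin p → ℝ) → ℕ → (Fin p → ℝ) := fun θ i => if i ∈ I then θ else Θ i
  have hP : P θ0 = Θ := funext fun i => by by_cases hi : i ∈ I <;> simp [P, hi, hΘI]
  have htop (v : Fin d → ℝ) :
      v ⬝ᵥ lam m = -fderiv ℝ (fun z => Real.log (pZ z)) (fwd Θ (m + 1)) v := by
    rw [Nat.add_sub_cancel] at hlam_top
    simpa using dotProduct_eq_apply_of_eq_apply_single
      (φ := -fderiv ℝ (fun z => Real.log (pZ z)) (fwd Θ (m + 1))) (fun k => by simp [hlam_top]) v
  have hrec : ∀ i < m, ∀ v : Fin d → ℝ, v ⬝ᵥ lam i =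
      fderiv ℝ (fun u => F (i + 1) u (Θ (i + 1))) (fwd Θ (i + 1)) v ⬝ᵥ lam (i + 1)
        - fderiv ℝ (fun u => g (i + 1) u (Θ (i + 1))) (fwd Θ (i + 1)) v := fun i hi =>
    dotProduct_eq_sub_of_eq_transpose_sub (by simpa using hlam_rec (i + 1) (by omega) (by omega))
  have hJ := fderiv_loss_apply_eq_sum_adjoint (x := fun i θ => fwd (P θ) i) (π := fun i θ => P θ i)
    (ℓ := fun i => (dotProductBilin ℝ ℝ).flip (lam i))
    (π' := fun i => if i ∈ I then .id ℝ _ else 0) (fun θ => hfwd0 (P θ)) (fun i θ => hfwds (P θ) i)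
    (fun i => (hF i).differentiable one_ne_zero _) (fun i => (hgC1 i).differentiable one_ne_zero _)
    (((hpZ.differentiable one_ne_zero) _).log (hpZpos _).ne')
    (fun i => hasFDerivAt_ite_const (i ∈ I) (Θ i) θ0) (by simpa [hP] using htop)
    (by simpa [hP] using hrec) (Pi.single k 1)
  simp only [hP] at hJ
  rw [show (fun θ => L (P θ)) = _ from funext fun θ => hL (P θ), hJ,
    ← Finset.sum_subset hI fun i _ hi => by simp [hi]]
  exact Finset.sum_congr rfl fun i hi => by simp [hi, dotProduct]

/-- Adjoint method with tied parameters: if `θ_{[i]} = θ` for all `i` in a subset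
`𝓘 ⊆ {0, …, n−1}` (the remaining parameters held fixed), the gradient of the loss with
respect to the shared parameter `θ` is
`Σ_{i ∈ 𝓘} [(∂F_{[i]}/∂θ(y_{[i]}, θ))ᵀ λ_{[i]} − ∇_θ g_{[i]}(y_{[i]}, θ)]`. -/
theorem adjoint_method_tied_parameters (d p n : ℕ) (hn : 1 ≤ n)
    (y : Fin d → ℝ)
    (F : ℕ → (Fin d → ℝ) → (Fin p → ℝ) → (Fin d → ℝ))
    (hF : ∀ i, ContDiff ℝ 1 (fun q : (Fin d → ℝ) × (Fin p → ℝ) => F i q.1 q.2))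
    (hFdet : ∀ i u θ, LinearMap.det (fderiv ℝ (fun u' => F i u' θ) u).toLinearMap ≠ 0)
    (g : ℕ → (Fin d → ℝ) → (Fin p → ℝ) → ℝ)
    (hg : ∀ i u θ,
      g i u θ = Real.log |LinearMap.det (fderiv ℝ (fun u' => F i u' θ) u).toLinearMap|)
    (hgC1 : ∀ i, ContDiff ℝ 1 (fun q : (Fin d → ℝ) × (Fin p → ℝ) => g i q.1 q.2))
    (pZ : (Fin d → ℝ) → ℝ) (hpZ : ContDiff ℝ 1 pZ) (hpZpos : ∀ z, 0 < pZ z)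
    (Θ : ℕ → (Fin p → ℝ))
    (fwd : (ℕ → (Fin p → ℝ)) → ℕ → (Fin d → ℝ))
    (hfwd0 : ∀ P, fwd P 0 = y)
    (hfwds : ∀ P k, fwd P (k + 1) = F k (fwd P k) (P k))
    (L : (ℕ → (Fin p → ℝ)) → ℝ)
    (hL : ∀ P, L P = -Real.log (pZ (fwd P n))
      - ∑ k ∈ Finset.range n, g k (fwd P k) (P k))
    (lam : ℕ → (Fin d → ℝ))
    (hlam_top : lam (n - 1) = fun k =>
      -(fderiv ℝ (fun z => Real.log (pZ z)) (fwd Θ n) (Pi.single k 1)))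
    (hlam_rec : ∀ i, 1 ≤ i → i ≤ n - 1 → lam (i - 1) = fun k =>
      (∑ j, fderiv ℝ (fun u => F i u (Θ i)) (fwd Θ i) (Pi.single k 1) j * lam i j)
        - fderiv ℝ (fun u => g i u (Θ i)) (fwd Θ i) (Pi.single k 1))
    -- tied parameters on the index set 𝓘
    (I : Finset ℕ) (hI : I ⊆ Finset.range n)
    (θ0 : Fin p → ℝ) (hΘI : ∀ i ∈ I, Θ i = θ0) :
    ∀ k : Fin p,
      fderiv ℝ (fun θ => L (fun i => if i ∈ I then θ else Θ i)) θ0 (Pi.single k 1)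
        = ∑ i ∈ I,
            ((∑ j, fderiv ℝ (fun θ => F i (fwd Θ i) θ) (Θ i) (Pi.single k 1) j * lam i j)
              - fderiv ℝ (fun θ => g i (fwd Θ i) θ) (Θ i) (Pi.single k 1)) :=
  adjoint_method_tied_parameters_general d p n hn y F hF g hgC1 pZ hpZ hpZpos Θ fwd hfwd0 hfwds L hL
    lam hlam_top hlam_rec I hI θ0 hΘI
end
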